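/- Let Λ = (λ_k)_{k≥0} be a strictly increasing sequence of positive real numbers satisfying the Müntz condition Σ_k 1/λ_k < ∞. For every integer n ≥ 1 and every ε ∈ (0,1), there exists an n-dimensional linear subspace E of M_Λ^1 (spanned by n monomials x ↦ x^{λ'_k} with the λ'_k chosen in Λ) such that for every f ∈ E: sup_{x∈[0,1]} |∫_0^x f(t) dt| ≥ ((1−ε)/(2n−1))·‖f‖_{L^1} and sup_{x∈(0,1]} |(1/x)∫_0^x f(t) dt| ≥ ((1−ε)/(2n−1))·‖f‖_{L^1}. Consequently the n-th Bernstein numbers of the Volterra and Cesàro operators on M_Λ^1 satisfy b_n(V_Λ) ≥ 1/(2n−1) and b_n(Γ_Λ) ≥ 1/(2n−1). -/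

import Mathlib

/-! Take `E` spanned by the first `n` monomials `t ^ Λ i`. A nonzero `g = ∑ cᵢ t ^ μᵢ` with
distinct exponents has fewer than `n` zeros in `(0, ∞)`: after dividing by one power,
Rolle's theorem puts a zero of the derivative, a sum of `n - 1` powers, between any two
consecutive zeros. Between consecutive zeros in `[0, 1]` the function `g` has constant sign,
so there `∫ |g|` equals the increment of the primitive `F x = ∫₀ˣ g`; summing over at most
`n` pieces, the first of which starts at `F 0 = 0`, gives `‖g‖₁ ≤ (2n - 1) sup |F|`.
Finally `sup |F| = ‖V g‖`, and `sup |F| ≤ ‖Γ g‖` because `1 / x ≥ 1` on `(0, 1]`. -/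

open MeasureTheory Set

/-- Lebesgue measure restricted to `[0,1]`. -/
noncomputable def mu01 : Measure ℝ := volume.restrict (Icc (0:ℝ) 1)

/-- The Müntz space `M_Λ^1`: the closure in `L¹([0,1])` of the linear span of the
monomials `t ↦ t ^ Λ k`. -/
noncomputable def muntzSpace (Λ : ℕ → ℝ) : Submodule ℝ (Lp ℝ 1 mu01) :=
  (Submodule.span ℝ {f : Lp ℝ 1 mu01 |
    ∃ k : ℕ, (f : ℝ → ℝ) =ᵐ[mu01] fun t => t ^ Λ k}).topologicalClosure

/-- The `n`-th Bernstein number of a bounded operator `T`: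
`b_n(T) = sup_{dim E = n} inf {‖T v‖ : v ∈ E, ‖v‖ = 1}`, expressed as the supremum of
all constants `c` bounding `‖T v‖` from below on the unit sphere of some
`n`-dimensional subspace. -/
noncomputable def bernsteinNumber {X Y : Type*} [NormedAddCommGroup X] [NormedSpace ℝ X]
    [NormedAddCommGroup Y] [NormedSpace ℝ Y] (T : X →L[ℝ] Y) (n : ℕ) : ℝ :=
  sSup {c : ℝ | ∃ E : Submodule ℝ X, Module.finrank ℝ ↥E = n ∧
    ∀ v ∈ E, ‖v‖ = 1 → c ≤ ‖T v‖}

theorem Set.encard_le_of_forall_finset_card_le {α : Type*} {s : Set α} {k : ℕ∞}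
    (h : ∀ t : Finset α, ↑t ⊆ s → (t.card : ℕ∞) ≤ k) : s.encard ≤ k := by
  rcases s.finite_or_infinite with hs | hs
  · simpa [hs.encard_eq_coe_toFinset_card] using h hs.toFinset (by simp)
  · induction k using ENat.recTopCoe with
    | top => exact le_top
    | coe k =>
      obtain ⟨t, hts, htk⟩ := hs.exists_subset_card_eq (k + 1)
      have := h t hts
      norm_cast at this
      omega

theorem encard_zeros_le_encard_zeros_deriv_add_one {f f' : ℝ → ℝ} {U : Set ℝ}
    (hU : U.OrdConnected) (hf : ∀ x ∈ U, HasDerivAt f (f' x) x) :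
    {x ∈ U | f x = 0}.encard ≤ {x ∈ U | f' x = 0}.encard + 1 := by
  refine Set.encard_le_of_forall_finset_card_le fun s hs => ?_
  have rolle : ∀ x ∈ s, ∀ y ∈ s, x < y → ∃ z, z ∈ Ioo x y ∧ f' z = 0 := by
    intro x hx y hy hxy
    have hsub : Icc x y ⊆ U := hU.out (hs hx).1 (hs hy).1
    exact exists_hasDerivAt_eq_zero hxy
      (fun t ht => (hf t (hsub ht)).continuousAt.continuousWithinAt)
      ((hs hx).2.trans (hs hy).2.symm) (fun t ht => hf t (hsub (Ioo_subset_Icc_self ht)))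
  choose! z hz using rolle
  set t := ((s ×ˢ s).filter fun p => p.1 < p.2).image fun p => z p.1 p.2
  have hts : ↑t ⊆ {x ∈ U | f' x = 0} := by
    simp only [t, Finset.coe_image, Finset.coe_filter, image_subset_iff]
    rintro ⟨x, y⟩ hxy
    simp only [Finset.mem_product] at hxy
    obtain ⟨⟨hx, hy⟩, hlt⟩ := hxy
    obtain ⟨hzI, hz0⟩ := hz x hx y hy hlt
    exact ⟨hU.out (hs hx).1 (hs hy).1 (Ioo_subset_Icc_self hzI), hz0⟩
  have hcard : s.card ≤ t.card + 1 := Finset.card_le_of_interleaved fun x hx y hy hxy _ =>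
    ⟨z x y, Finset.mem_image_of_mem _
      (Finset.mem_filter.mpr ⟨Finset.mk_mem_product hx hy, hxy⟩), (hz x hx y hy hxy).1⟩
  calc (s.card : ℕ∞) ≤ t.card + 1 := by exact_mod_cast hcard
    _ ≤ _ := by gcongr; simpa using Set.encard_le_encard hts

theorem encard_pos_zeros_rpow_sum_lt {m : ℕ} {μ a : Fin m → ℝ} (hμ : Function.Injective μ)
    (ha : a ≠ 0) : {x ∈ Ioi 0 | ∑ i, a i * x ^ μ i = 0}.encard < m := by
  induction m with
  | zero => exact absurd (Subsingleton.elim a 0) ha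
  | succ m ih =>
    obtain ⟨i₀, hi₀⟩ := Function.ne_iff.mp ha
    -- dividing by `x ^ μ i₀` and differentiating removes the `i₀`-th term
    set ν : Fin m → ℝ := fun j => μ (i₀.succAbove j) - μ i₀ - 1
    set b : Fin m → ℝ := fun j => a (i₀.succAbove j) * (μ (i₀.succAbove j) - μ i₀)
    have hμν : ∀ j, μ (i₀.succAbove j) - μ i₀ ≠ 0 := fun j =>
      sub_ne_zero.mpr (hμ.ne (Fin.succAbove_ne i₀ j))
    rcases eq_or_ne b 0 with hb | hb
    · have hz : ∀ j, a (i₀.succAbove j) = 0 := fun j =>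
        (mul_eq_zero.mp (congrFun hb j)).resolve_right (hμν j)
      suffices {x ∈ Ioi 0 | ∑ i, a i * x ^ μ i = 0} = ∅ by rw [this]; simp
      refine eq_empty_of_forall_notMem fun x ⟨hx, hsum⟩ => ?_
      rw [Fin.sum_univ_succAbove _ i₀] at hsum
      simp only [hz, zero_mul, Finset.sum_const_zero, add_zero] at hsum
      exact mul_ne_zero hi₀ (Real.rpow_pos_of_pos hx _).ne' hsum
    · set g : ℝ → ℝ := fun x => ∑ i, a i * x ^ (μ i - μ i₀)
      have hg : ∀ x ∈ Ioi (0 : ℝ), HasDerivAt g (∑ j, b j * x ^ ν j) x := by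
        intro x hx
        refine (HasDerivAt.fun_sum fun i (_ : i ∈ Finset.univ) =>
          (Real.hasDerivAt_rpow_const (Or.inl (ne_of_gt hx))).const_mul (a i)).congr_deriv ?_
        rw [Fin.sum_univ_succAbove _ i₀]
        simp [b, ν, mul_assoc]
      have hsub : {x ∈ Ioi 0 | ∑ i, a i * x ^ μ i = 0} ⊆ {x ∈ Ioi 0 | g x = 0} := by
        rintro x ⟨hx, hsum⟩
        refine ⟨hx, ?_⟩
        simp only [g, Real.rpow_sub hx, mul_div_assoc', ← Finset.sum_div, hsum, zero_div]
      have hν : Function.Injective ν := fun j j' h =>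
        Fin.succAbove_right_injective (hμ (by simpa [ν] using h))
      calc _ ≤ {x ∈ Ioi 0 | g x = 0}.encard := encard_le_encard hsub
        _ ≤ {x ∈ Ioi 0 | ∑ j, b j * x ^ ν j = 0}.encard + 1 :=
          encard_zeros_le_encard_zeros_deriv_add_one ordConnected_Ioi hg
        _ < m + 1 := (ENat.add_lt_add_iff_right ENat.one_ne_top).mpr (ih hν hb)
        _ = ↑(m + 1) := by norm_cast

theorem integral_abs_eq_abs_integral_of_forall_ne_zero {g : ℝ → ℝ} {a b : ℝ} (hab : a ≤ b)
    (hg : ContinuousOn g (Ioo a b)) (h0 : ∀ x ∈ Ioo a b, g x ≠ 0) :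
    ∫ x in a..b, |g x| = |∫ x in a..b, g x| := by
  have hnonneg : 0 ≤ ∫ x in a..b, |g x| :=
    intervalIntegral.integral_nonneg hab fun _ _ => abs_nonneg _
  rcases isPreconnected_Ioo.eq_or_eq_neg_of_sq_eq hg.abs hg (fun x _ => sq_abs (g x))
    (h0 _ ·) with h | h
  · rw [intervalIntegral.integral_congr_Ioo_of_le hab h] at hnonneg ⊢
    exact (abs_of_nonneg hnonneg).symm
  · rw [intervalIntegral.integral_congr_Ioo_of_le hab h] at hnonneg ⊢
    simp only [Pi.neg_apply, intervalIntegral.integral_neg] at hnonneg ⊢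
    exact (abs_of_nonpos (neg_nonneg.mp hnonneg)).symm

theorem integral_abs_le_of_encard_zeros_le {g : ℝ → ℝ} {a b M : ℝ} {k : ℕ} (hab : a ≤ b)
    (hg : ContinuousOn g (Icc a b)) (hM : ∀ x ∈ Icc a b, |∫ t in a..x, g t| ≤ M)
    (hk : {x ∈ Ioo a b | g x = 0}.encard ≤ k) :
    ∫ t in a..b, |g t| ≤ (2 * k + 1) * M := by
  have hM0 : 0 ≤ M := by simpa using hM a (left_mem_Icc.mpr hab)
  induction k generalizing b with
  | zero =>
    have hZ : {x ∈ Ioo a b | g x = 0} = ∅ := encard_eq_zero.mp (by simpa using hk)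
    have h0 : ∀ x ∈ Ioo a b, g x ≠ 0 := fun x hx hgx =>
      eq_empty_iff_forall_notMem.mp hZ x ⟨hx, hgx⟩
    rw [integral_abs_eq_abs_integral_of_forall_ne_zero hab (hg.mono Ioo_subset_Icc_self) h0]
    simpa using hM b (right_mem_Icc.mpr hab)
  | succ k ih =>
    rcases eq_empty_or_nonempty {x ∈ Ioo a b | g x = 0} with hZ | hZ
    · have := ih hab hg hM (by rw [hZ]; simp)
      push_cast
      linarith
    obtain ⟨t₀, ⟨ht₀, hgt₀⟩, hmax⟩ := exists_max_image _ id (finite_of_encard_le_coe hk) hZ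
    have hg₁ : ContinuousOn g (Icc a t₀) := hg.mono (Icc_subset_Icc_right ht₀.2.le)
    have hg₂ : ContinuousOn g (Icc t₀ b) := hg.mono (Icc_subset_Icc_left ht₀.1.le)
    have hfirst : ∫ t in a..t₀, |g t| ≤ (2 * k + 1) * M := by
      refine ih ht₀.1.le hg₁ (fun x hx => hM x ⟨hx.1, hx.2.trans ht₀.2.le⟩) ?_
      have hsub : {x ∈ Ioo a t₀ | g x = 0} ⊆ {x ∈ Ioo a b | g x = 0} \ {t₀} :=
        fun x ⟨hx, hgx⟩ => ⟨⟨⟨hx.1, hx.2.trans ht₀.2⟩, hgx⟩, hx.2.ne⟩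
      refine (encard_le_encard hsub).trans ?_
      rw [← ENat.add_le_add_iff_right ENat.one_ne_top, encard_sdiff_singleton_add_one
        (show t₀ ∈ {x ∈ Ioo a b | g x = 0} from ⟨ht₀, hgt₀⟩)]
      exact_mod_cast hk
    have hlast : ∫ t in t₀..b, |g t| ≤ 2 * M := by
      have h0 : ∀ x ∈ Ioo t₀ b, g x ≠ 0 := fun x hx hgx =>
        (hmax x ⟨⟨ht₀.1.trans hx.1, hx.2⟩, hgx⟩).not_gt hx.1
      rw [integral_abs_eq_abs_integral_of_forall_ne_zero ht₀.2.le
        (hg₂.mono Ioo_subset_Icc_self) h0, ← intervalIntegral.integral_interval_sub_left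
        (hg.intervalIntegrable_of_Icc hab) (hg₁.intervalIntegrable_of_Icc ht₀.1.le)]
      linarith [abs_sub (∫ t in a..b, g t) (∫ t in a..t₀, g t), hM b (right_mem_Icc.mpr hab),
        hM t₀ (Ioo_subset_Icc_self ht₀)]
    rw [← intervalIntegral.integral_add_adjacent_intervals
      (hg₁.abs.intervalIntegrable_of_Icc ht₀.1.le)
      (hg₂.abs.intervalIntegrable_of_Icc ht₀.2.le)]
    push_cast
    linarith

theorem integral_abs_rpow_sum_le {n : ℕ} (hn : n ≠ 0) {μ : Fin n → ℝ}
    (hμ : Function.Injective μ) (hμ₀ : ∀ i, 0 ≤ μ i) (c : Fin n → ℝ) {M : ℝ}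
    (hM : ∀ x ∈ Icc (0:ℝ) 1, |∫ t in 0..x, ∑ i, c i * t ^ μ i| ≤ M) :
    ∫ t in 0..1, |∑ i, c i * t ^ μ i| ≤ (2 * n - 1) * M := by
  obtain ⟨k, rfl⟩ := Nat.exists_eq_succ_of_ne_zero hn
  have hM₀ : 0 ≤ M := by simpa using hM 0 (left_mem_Icc.mpr zero_le_one)
  rcases eq_or_ne c 0 with rfl | hc
  · simp only [Pi.zero_apply, zero_mul, Finset.sum_const_zero, abs_zero,
      intervalIntegral.integral_zero]
    exact mul_nonneg (by push_cast; linarith [k.cast_nonneg (α := ℝ)]) hM₀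
  have hsub : {x ∈ Ioo 0 1 | ∑ i, c i * x ^ μ i = 0} ⊆
      {x ∈ Ioi 0 | ∑ i, c i * x ^ μ i = 0} := fun x hx => ⟨hx.1.1, hx.2⟩
  have hk : {x ∈ Ioo 0 1 | ∑ i, c i * x ^ μ i = 0}.encard ≤ k :=
    (ENat.lt_add_one_iff (ENat.natCast_ne_top k)).mp <|
      (encard_le_encard hsub).trans_lt (encard_pos_zeros_rpow_sum_lt hμ hc)
  have hcont : Continuous fun t : ℝ => ∑ i, c i * t ^ μ i :=
    continuous_finsetSum _ fun i _ =>
      continuous_const.mul (Real.continuous_rpow_const (hμ₀ i))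
  have := integral_abs_le_of_encard_zeros_le zero_le_one hcont.continuousOn hM hk
  push_cast
  linarith

instance : IsFiniteMeasure mu01 := by unfold mu01; infer_instance

theorem memLp_rpow_mu01 {c : ℝ} (hc : 0 ≤ c) : MemLp (fun t : ℝ => t ^ c) 1 mu01 := by
  refine MemLp.of_bound (Real.continuous_rpow_const hc).aestronglyMeasurable 1 ?_
  refine (ae_restrict_iff' measurableSet_Icc).mpr
    (Filter.Eventually.of_forall fun t ht => ?_)
  rw [Real.norm_eq_abs, abs_of_nonneg (Real.rpow_nonneg ht.1 c)]
  exact Real.rpow_le_one ht.1 ht.2 hc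

theorem norm_eq_intervalIntegral_abs_of_ae_eq {f : Lp ℝ 1 mu01} {g : ℝ → ℝ}
    (hfg : f =ᵐ[mu01] g) : ‖f‖ = ∫ t in 0..1, |g t| := by
  rw [L1.norm_eq_integral_norm, integral_congr_ae (hfg.mono fun t ht => congrArg norm ht),
    intervalIntegral.integral_of_le zero_le_one, ← integral_Icc_eq_integral_Ioc]
  rfl

theorem setIntegral_Ioc_eq_intervalIntegral_of_ae_eq {f g : ℝ → ℝ} (hfg : f =ᵐ[mu01] g)
    {x : ℝ} (hx : x ∈ Icc (0:ℝ) 1) : ∫ t in Ioc 0 x, f t ∂mu01 = ∫ t in 0..x, g t := by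
  rw [integral_congr_ae (ae_restrict_of_ae hfg), intervalIntegral.integral_of_le hx.1, mu01,
    Measure.restrict_restrict measurableSet_Ioc,
    inter_eq_left.mpr ((Ioc_subset_Ioc_right hx.2).trans Ioc_subset_Icc_self)]

noncomputable def muntzMonomial (Λ : ℕ → ℝ) (k : ℕ) (hk : 0 ≤ Λ k) : muntzSpace Λ :=
  ⟨(memLp_rpow_mu01 hk).toLp _, Submodule.le_topologicalClosure _
    (Submodule.subset_span ⟨k, (memLp_rpow_mu01 hk).coeFn_toLp⟩)⟩

section muntzMonomial

variable {Λ : ℕ → ℝ} (hΛ : ∀ k, 0 ≤ Λ k)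

theorem coeFn_muntzMonomial (k : ℕ) :
    ((muntzMonomial Λ k (hΛ k) : Lp ℝ 1 mu01) : ℝ → ℝ) =ᵐ[mu01] fun t => t ^ Λ k :=
  (memLp_rpow_mu01 (hΛ k)).coeFn_toLp

theorem coeFn_sum_smul_muntzMonomial {n : ℕ} (c : Fin n → ℝ) :
    (((∑ i, c i • muntzMonomial Λ i (hΛ i) : muntzSpace Λ) : Lp ℝ 1 mu01) : ℝ → ℝ)
      =ᵐ[mu01] fun t => ∑ i, c i * t ^ Λ i := by
  have hterm : ∀ᵐ t ∂mu01, ∀ i : Fin n,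
      ((c i • muntzMonomial Λ i (hΛ i) : muntzSpace Λ) : Lp ℝ 1 mu01) t = c i * t ^ Λ i := by
    refine ae_all_iff.mpr fun i => ?_
    filter_upwards [Lp.coeFn_smul (c i) (muntzMonomial Λ i (hΛ i) : Lp ℝ 1 mu01),
      coeFn_muntzMonomial hΛ i] with t hsmul hmono
    rw [Submodule.coe_smul, hsmul, Pi.smul_apply, hmono, smul_eq_mul]
  rw [Submodule.coe_sum]
  filter_upwards [Lp.coeFn_fun_finsetSum Finset.univ
    fun i => ((c i • muntzMonomial Λ i (hΛ i) : muntzSpace Λ) : Lp ℝ 1 mu01), hterm]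
    with t hsum ht
  rw [hsum]
  exact Finset.sum_congr rfl fun i _ => ht i

variable {hΛ}

theorem linearIndependent_muntzMonomial (hΛinj : Function.Injective Λ) (n : ℕ) :
    LinearIndependent ℝ fun i : Fin n => muntzMonomial Λ i (hΛ i) := by
  rw [Fintype.linearIndependent_iff]
  intro c hc i
  by_contra hi
  have hG : (fun t => ∑ i, c i * t ^ Λ i) =ᵐ[mu01] 0 := by
    refine (coeFn_sum_smul_muntzMonomial hΛ c).symm.trans ?_
    rw [hc]
    exact Lp.coeFn_zero ℝ 1 mu01
  have hcont : Continuous fun t : ℝ => ∑ i : Fin n, c i * t ^ Λ i :=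
    continuous_finsetSum _ fun i _ =>
      continuous_const.mul (Real.continuous_rpow_const (hΛ i))
  have hzero := Measure.eqOn_Icc_of_ae_eq volume zero_ne_one hG hcont.continuousOn
    continuousOn_const
  have hsub : Ioo (0:ℝ) 1 ⊆ {x ∈ Ioi 0 | ∑ i, c i * x ^ Λ i = 0} :=
    fun x hx => ⟨hx.1, hzero (Ioo_subset_Icc_self hx)⟩
  have := (encard_le_encard hsub).trans_lt <| encard_pos_zeros_rpow_sum_lt
    (hΛinj.comp Fin.val_injective) (a := c) (Function.ne_iff.mpr ⟨i, hi⟩)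
  simp [(Ioo_infinite zero_lt_one).encard_eq] at this

theorem norm_le_of_forall_abs_setIntegral_le (hΛinj : Function.Injective Λ) {n : ℕ}
    (hn : n ≠ 0) {f : muntzSpace Λ}
    (hf : f ∈ Submodule.span ℝ (range fun i : Fin n => muntzMonomial Λ i (hΛ i))) {M : ℝ}
    (hM : ∀ x ∈ Icc (0:ℝ) 1, |∫ t in Ioc 0 x, (f : Lp ℝ 1 mu01) t ∂mu01| ≤ M) :
    ‖f‖ ≤ (2 * n - 1) * M := by
  obtain ⟨c, rfl⟩ := (Submodule.mem_span_range_iff_exists_fun ℝ).mp hf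
  have hfG := coeFn_sum_smul_muntzMonomial hΛ c
  rw [Submodule.coe_norm, norm_eq_intervalIntegral_abs_of_ae_eq hfG]
  exact integral_abs_rpow_sum_le hn (hΛinj.comp Fin.val_injective) (fun i => hΛ i) c
    fun x hx => setIntegral_Ioc_eq_intervalIntegral_of_ae_eq hfG hx ▸ hM x hx

end muntzMonomial

theorem le_bernsteinNumber {X Y : Type*} [NormedAddCommGroup X] [NormedSpace ℝ X]
    [NormedAddCommGroup Y] [NormedSpace ℝ Y] (T : X →L[ℝ] Y) {E : Submodule ℝ X} {n : ℕ}
    (hE : Module.finrank ℝ E = n) (hn : n ≠ 0) {c : ℝ} (hc : ∀ v ∈ E, c * ‖v‖ ≤ ‖T v‖) :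
    c ≤ bernsteinNumber T n := by
  refine le_csSup ⟨‖T‖, ?_⟩ ⟨E, hE, fun v hv hv1 => by simpa [hv1] using hc v hv⟩
  rintro c' ⟨E', hE', hc'⟩
  have : Nontrivial E' := Module.nontrivial_of_finrank_pos (hE' ▸ Nat.pos_of_ne_zero hn)
  obtain ⟨v, hv⟩ := exists_norm_eq E' zero_le_one
  calc c' ≤ ‖T v‖ := hc' v v.2 hv
    _ ≤ ‖T‖ * ‖(v : X)‖ := T.le_opNorm v
    _ = ‖T‖ := by rw [Submodule.norm_coe, hv, mul_one]

theorem abs_setIntegral_Ioc_le_norm_cesaro {Λ : ℕ → ℝ}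
    {Γ : muntzSpace Λ →L[ℝ] BoundedContinuousFunction (Ioc (0:ℝ) 1) ℝ}
    (hΓ : ∀ (f : muntzSpace Λ) (x : Ioc (0:ℝ) 1),
      Γ f x = 1 / (x:ℝ) * ∫ t in Ioc 0 (x:ℝ), (f : Lp ℝ 1 mu01) t ∂mu01)
    (f : muntzSpace Λ) {x : ℝ} (hx : x ∈ Icc (0:ℝ) 1) :
    |∫ t in Ioc 0 x, (f : Lp ℝ 1 mu01) t ∂mu01| ≤ ‖Γ f‖ := by
  rcases hx.1.eq_or_lt with rfl | hx₀
  · simp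
  calc |∫ t in Ioc 0 x, (f : Lp ℝ 1 mu01) t ∂mu01|
      ≤ |1 / x * ∫ t in Ioc 0 x, (f : Lp ℝ 1 mu01) t ∂mu01| := by
        rw [abs_mul, abs_of_pos (one_div_pos.mpr hx₀)]
        exact le_mul_of_one_le_left (abs_nonneg _) (one_le_one_div hx₀ hx.2)
    _ = |Γ f ⟨x, hx₀, hx.2⟩| := by rw [hΓ]
    _ ≤ ‖Γ f‖ := (Γ f).norm_coe_le_norm _

theorem bernsteinNumbers_of_volterra_and_cesaro_lower_bound_general
    (Λ : ℕ → ℝ) (hmono : StrictMono Λ) (hpos : ∀ k, 0 < Λ k)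
    (V : ↥(muntzSpace Λ) →L[ℝ] C(Icc (0:ℝ) 1, ℝ))
    (hV : ∀ (f : ↥(muntzSpace Λ)) (x : Icc (0:ℝ) 1),
      V f x = ∫ t in Ioc (0:ℝ) (x:ℝ), ((f : Lp ℝ 1 mu01) : ℝ → ℝ) t ∂mu01)
    (Γ : ↥(muntzSpace Λ) →L[ℝ] BoundedContinuousFunction (Ioc (0:ℝ) 1) ℝ)
    (hΓ : ∀ (f : ↥(muntzSpace Λ)) (x : Ioc (0:ℝ) 1),
      Γ f x = (1/(x:ℝ)) * ∫ t in Ioc (0:ℝ) (x:ℝ), ((f : Lp ℝ 1 mu01) : ℝ → ℝ) t ∂mu01)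
    (n : ℕ) (hn : 1 ≤ n) (ε : ℝ) (hε : ε ∈ Ioo (0:ℝ) 1) :
    (∃ (k : Fin n → ℕ) (e : Fin n → ↥(muntzSpace Λ)), StrictMono k ∧
      (∀ i, (((e i : Lp ℝ 1 mu01)) : ℝ → ℝ) =ᵐ[mu01] fun t => t ^ Λ (k i)) ∧
      Module.finrank ℝ ↥(Submodule.span ℝ (Set.range e)) = n ∧
      ∀ f ∈ Submodule.span ℝ (Set.range e),
        ((1 - ε) / (2 * (n:ℝ) - 1)) * ‖f‖ ≤
          (⨆ x : Icc (0:ℝ) 1,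
            |∫ t in Ioc (0:ℝ) (x:ℝ), ((f : Lp ℝ 1 mu01) : ℝ → ℝ) t ∂mu01|) ∧
        ((1 - ε) / (2 * (n:ℝ) - 1)) * ‖f‖ ≤
          (⨆ x : Ioc (0:ℝ) 1,
            |(1/(x:ℝ)) * ∫ t in Ioc (0:ℝ) (x:ℝ), ((f : Lp ℝ 1 mu01) : ℝ → ℝ) t ∂mu01|)) ∧
    1 / (2 * (n:ℝ) - 1) ≤ bernsteinNumber V n ∧
    1 / (2 * (n:ℝ) - 1) ≤ bernsteinNumber Γ n := by
  have hΛ : ∀ k, 0 ≤ Λ k := fun k => (hpos k).le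
  set e : Fin n → muntzSpace Λ := fun i => muntzMonomial Λ i (hΛ i)
  have hn₀ : n ≠ 0 := Nat.one_le_iff_ne_zero.mp hn
  have h2n : 0 < 2 * (n:ℝ) - 1 := by linarith [show (1:ℝ) ≤ n by exact_mod_cast hn]
  have hrank : Module.finrank ℝ (Submodule.span ℝ (range e)) = n := by
    rw [finrank_span_eq_card (linearIndependent_muntzMonomial hmono.injective n),
      Fintype.card_fin]
  have hlower : ∀ f ∈ Submodule.span ℝ (range e), ∀ M : ℝ,
      (∀ x ∈ Icc (0:ℝ) 1, |∫ t in Ioc 0 x, (f : Lp ℝ 1 mu01) t ∂mu01| ≤ M) →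
      1 / (2 * (n:ℝ) - 1) * ‖f‖ ≤ M := fun f hf M hM => by
    rw [one_div_mul_eq_div, div_le_iff₀' h2n]
    exact norm_le_of_forall_abs_setIntegral_le hmono.injective hn₀ hf hM
  have hVf : ∀ f ∈ Submodule.span ℝ (range e), 1 / (2 * (n:ℝ) - 1) * ‖f‖ ≤ ‖V f‖ :=
    fun f hf => hlower f hf _ fun x hx => by simpa [hV] using (V f).norm_coe_le_norm ⟨x, hx⟩
  have hΓf : ∀ f ∈ Submodule.span ℝ (range e), 1 / (2 * (n:ℝ) - 1) * ‖f‖ ≤ ‖Γ f‖ :=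
    fun f hf => hlower f hf _ fun x hx => abs_setIntegral_Ioc_le_norm_cesaro hΓ f hx
  have hε₁ : (1 - ε) / (2 * (n:ℝ) - 1) ≤ 1 / (2 * (n:ℝ) - 1) := by
    gcongr; linarith [hε.1]
  refine ⟨⟨Fin.val, e, Fin.val_strictMono, fun i => coeFn_muntzMonomial hΛ i, hrank,
    fun f hf => ⟨?_, ?_⟩⟩, le_bernsteinNumber V hrank hn₀ hVf,
    le_bernsteinNumber Γ hrank hn₀ hΓf⟩
  · simpa [ContinuousMap.norm_eq_iSup_norm, hV] using
      (mul_le_mul_of_nonneg_right hε₁ (norm_nonneg f)).trans (hVf f hf)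
  · simpa [BoundedContinuousFunction.norm_eq_iSup_norm, hΓ] using
      (mul_le_mul_of_nonneg_right hε₁ (norm_nonneg f)).trans (hΓf f hf)

/-- Under the Müntz condition, for every `n ≥ 1` and `ε ∈ (0,1)`
there is an `n`-dimensional subspace `E ⊆ M_Λ^1` spanned by `n` monomials
`x ↦ x^{λ'_k}` (exponents chosen in `Λ`) such that for every `f ∈ E`,
`sup_{x∈[0,1]} |∫_0^x f| ≥ ((1-ε)/(2n-1))‖f‖₁` and
`sup_{x∈(0,1]} |(1/x)∫_0^x f| ≥ ((1-ε)/(2n-1))‖f‖₁`. Consequently the `n`-th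
Bernstein numbers of the Volterra and Cesàro operators on `M_Λ^1` are at least
`1/(2n-1)`. -/
theorem bernsteinNumbers_of_volterra_and_cesaro_lower_bound
    (Λ : ℕ → ℝ) (hmono : StrictMono Λ) (hpos : ∀ k, 0 < Λ k)
    (hmuntz : Summable fun k => 1 / Λ k)
    (V : ↥(muntzSpace Λ) →L[ℝ] C(Icc (0:ℝ) 1, ℝ))
    (hV : ∀ (f : ↥(muntzSpace Λ)) (x : Icc (0:ℝ) 1),
      V f x = ∫ t in Ioc (0:ℝ) (x:ℝ), ((f : Lp ℝ 1 mu01) : ℝ → ℝ) t ∂mu01)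
    (Γ : ↥(muntzSpace Λ) →L[ℝ] BoundedContinuousFunction (Ioc (0:ℝ) 1) ℝ)
    (hΓ : ∀ (f : ↥(muntzSpace Λ)) (x : Ioc (0:ℝ) 1),
      Γ f x = (1/(x:ℝ)) * ∫ t in Ioc (0:ℝ) (x:ℝ), ((f : Lp ℝ 1 mu01) : ℝ → ℝ) t ∂mu01)
    (n : ℕ) (hn : 1 ≤ n) (ε : ℝ) (hε : ε ∈ Ioo (0:ℝ) 1) :
    (∃ (k : Fin n → ℕ) (e : Fin n → ↥(muntzSpace Λ)), StrictMono k ∧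
      (∀ i, (((e i : Lp ℝ 1 mu01)) : ℝ → ℝ) =ᵐ[mu01] fun t => t ^ Λ (k i)) ∧
      Module.finrank ℝ ↥(Submodule.span ℝ (Set.range e)) = n ∧
      ∀ f ∈ Submodule.span ℝ (Set.range e),
        ((1 - ε) / (2 * (n:ℝ) - 1)) * ‖f‖ ≤
          (⨆ x : Icc (0:ℝ) 1,
            |∫ t in Ioc (0:ℝ) (x:ℝ), ((f : Lp ℝ 1 mu01) : ℝ → ℝ) t ∂mu01|) ∧
        ((1 - ε) / (2 * (n:ℝ) - 1)) * ‖f‖ ≤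
          (⨆ x : Ioc (0:ℝ) 1,
            |(1/(x:ℝ)) * ∫ t in Ioc (0:ℝ) (x:ℝ), ((f : Lp ℝ 1 mu01) : ℝ → ℝ) t ∂mu01|)) ∧
    1 / (2 * (n:ℝ) - 1) ≤ bernsteinNumber V n ∧
    1 / (2 * (n:ℝ) - 1) ≤ bernsteinNumber Γ n :=
  bernsteinNumbers_of_volterra_and_cesaro_lower_bound_general Λ hmono hpos V hV Γ hΓ n hn ε hε
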